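/- Let P = {1234, 1324, 1243}. If π is a permutation of {1,...,n} avoiding all patterns in P whose first four entries reduce to 2413, then π(2) = n. -/
import Mathlib


def ContainsF {n k : ℕ} (f : Fin n → Fin n) (σ : Fin k → Fin k) : Prop :=
  ∃ g : Fin k → Fin n, StrictMono g ∧ ∀ a b : Fin k, σ a < σ b ↔ f (g a) < f (g b)

noncomputable def p1234 : Equiv.Perm (Fin 4) := Equiv.ofBijective ![0, 1, 2, 3] (by decide)
noncomputable def p1324 : Equiv.Perm (Fin 4) := Equiv.ofBijective ![0, 2, 1, 3] (by decide)
noncomputable def p1243 : Equiv.Perm (Fin 4) := Equiv.ofBijective ![0, 1, 3, 2] (by decide)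

set_option maxHeartbeats 1000000 in
/-- If `π` avoids 1234, 1324 and 1243 and its first four entries reduce to
2413 (i.e. `π 3 < π 1 < π 4 < π 2` in 1-indexed positions), then its second
entry is `n` (0-indexed value `n - 1`). -/
theorem second_entry_forced (n : ℕ) (hn : 4 ≤ n) (π : Equiv.Perm (Fin n))
    (h1 : ¬ ContainsF (⇑π) ⇑p1234)
    (h2 : ¬ ContainsF (⇑π) ⇑p1324)
    (h3 : ¬ ContainsF (⇑π) ⇑p1243)
    (hp1 : π ⟨2, by omega⟩ < π ⟨0, by omega⟩)
    (hp2 : π ⟨0, by omega⟩ < π ⟨3, by omega⟩)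
    (hp3 : π ⟨3, by omega⟩ < π ⟨1, by omega⟩) :
    ((π ⟨1, by omega⟩ : Fin n) : ℕ) + 1 = n := by
  by_contra h
  -- the maximum value n-1
  have hM : True := trivial
  have hval : ((π ⟨1, by omega⟩ : Fin n) : ℕ) < n - 1 := by
    have := (π ⟨1, by omega⟩).isLt
    omega
  have h1lt : π ⟨1, by omega⟩ < (⟨n - 1, by omega⟩ : Fin n) := hval
  obtain ⟨j, hπj⟩ : ∃ j, π j = (⟨n - 1, by omega⟩ : Fin n) := ⟨π.symm _, π.apply_symm_apply _⟩
  have hjv : 4 ≤ (j : ℕ) := by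
    have e0 : j ≠ ⟨0, by omega⟩ := by
      intro e; rw [e] at hπj; rw [hπj] at hp2
      exact absurd (lt_trans hp2 (lt_trans hp3 h1lt)) (lt_irrefl _)
    have e1 : j ≠ ⟨1, by omega⟩ := by
      intro e; rw [e] at hπj; rw [hπj] at h1lt; exact lt_irrefl _ h1lt
    have e2 : j ≠ ⟨2, by omega⟩ := by
      intro e; rw [e] at hπj; rw [hπj] at hp1
      exact absurd (lt_trans hp1 (lt_trans hp2 (lt_trans hp3 h1lt))) (lt_irrefl _)
    have e3 : j ≠ ⟨3, by omega⟩ := by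
      intro e; rw [e] at hπj; rw [hπj] at hp3
      exact absurd (lt_trans hp3 h1lt) (lt_irrefl _)
    have v0 : (j : ℕ) ≠ 0 := fun hv => e0 (Fin.ext hv)
    have v1 : (j : ℕ) ≠ 1 := fun hv => e1 (Fin.ext hv)
    have v2 : (j : ℕ) ≠ 2 := fun hv => e2 (Fin.ext hv)
    have v3 : (j : ℕ) ≠ 3 := fun hv => e3 (Fin.ext hv)
    omega
  have hjval : ((π j : Fin n) : ℕ) = n - 1 := by rw [hπj]
  have hjlt : π ⟨1, by omega⟩ < π j := by rw [Fin.lt_def]; omega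
  have h01 : π ⟨0, by omega⟩ < π ⟨1, by omega⟩ := hp2.trans hp3
  have h0j : π ⟨0, by omega⟩ < π j := h01.trans hjlt
  have h3j : π ⟨3, by omega⟩ < π j := hp3.trans hjlt
  apply h2
  refine ⟨![⟨0, by omega⟩, ⟨1, by omega⟩, ⟨3, by omega⟩, j], ?_, ?_⟩
  · intro a b hab
    fin_cases a <;> fin_cases b <;>
      first
        | exact absurd hab (by decide)
        | exact (show (0:ℕ) < 1 by omega)
        | exact (show (0:ℕ) < 3 by omega)
        | exact (show (0:ℕ) < (j:ℕ) by omega)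
        | exact (show (1:ℕ) < 3 by omega)
        | exact (show (1:ℕ) < (j:ℕ) by omega)
        | exact (show (3:ℕ) < (j:ℕ) by omega)
  · intro a b
    fin_cases a <;> fin_cases b
    · exact iff_of_false (by decide) (lt_irrefl _)
    · exact iff_of_true (by decide) h01
    · exact iff_of_true (by decide) hp2
    · exact iff_of_true (by decide) h0j
    · exact iff_of_false (by decide) (asymm h01)
    · exact iff_of_false (by decide) (lt_irrefl _)
    · exact iff_of_false (by decide) (asymm hp3)
    · exact iff_of_true (by decide) hjlt
    · exact iff_of_false (by decide) (asymm hp2)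
    · exact iff_of_true (by decide) hp3
    · exact iff_of_false (by decide) (lt_irrefl _)
    · exact iff_of_true (by decide) h3j
    · exact iff_of_false (by decide) (asymm h0j)
    · exact iff_of_false (by decide) (asymm hjlt)
    · exact iff_of_false (by decide) (asymm h3j)
    · exact iff_of_false (by decide) (lt_irrefl _)
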